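/- Let W be a finite-dimensional complex vector space, C a cubic on W and C* a cubic on W*, and define the quartic Q : V → ℂ by Q(α,r,s*,β*) = (3αβ* − (1/2)s*(r))² + (1/3)(β*·((C r r) r) + α·(s*(C* s* s*))) − (1/6)·(C r r)(C* s* s*). Assume the identities: (I) for all r, t ∈ W and s* ∈ W*, 2·(C r r)(C* s* (C r t)) = s*(t)·((C r r) r) + 3·s*(r)·((C r r) t); and (I*) for all a, b ∈ W* and r ∈ W, 2·(C r (C* a b))(C* a a) = b(r)·(a(C* a a)) + 3·a(r)·(b(C* a a)). Then Q is infinitesimally invariant under the following operators X on V, in the sense that for every w ∈ V there exist c₂, c₃, c₄ ∈ ℂ with Q(w + ε·Xw) = Q(w) + c₂ε² + c₃ε³ + c₄ε⁴ for all ε ∈ ℂ (i.e. the linear term in ε vanishes): (i) X = ρ_W(t) for every t ∈ W; (ii) X = ρ_{W*}(t*) for every t* ∈ W*; (iii) X = E; (iv) X = ρ(ψ) for every ψ ∈ End ℂ W such that C and C* are infinitesimally ψ-invariant, i.e. (C (ψr) s) t + (C r (ψs)) t + (C r s)(ψ t) = 0 for all r,s,t ∈ W and c(C* (a∘ψ)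 b) + c(C* a (b∘ψ)) + (c∘ψ)(C* a b) = 0 for all a,b,c ∈ W*. -/
import Mathlib


noncomputable section

/-- `V = ℂ × W × W* × ℂ`. -/
abbrev VV (W : Type*) [AddCommGroup W] [Module ℂ W] :=
  ℂ × W × Module.Dual ℂ W × ℂ

/-- The action `ρ_W(t)(α,r,s*,β*) = (0, 3α·t, C r t, (1/2)·s*(t))`. -/
def rhoW {W : Type*} [AddCommGroup W] [Module ℂ W]
    (C : W →ₗ[ℂ] W →ₗ[ℂ] Module.Dual ℂ W) (t : W) (w : VV W) : VV W :=
  (0, (3 * w.1) • t, C w.2.1 t, (1 / 2) * w.2.2.1 t)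

/-- The action `ρ_{W*}(t*)(α,r,s*,β*) = ((1/2)·t*(r), C* s* t*, 3β*·t*, 0)`. -/
def rhoWs {W : Type*} [AddCommGroup W] [Module ℂ W]
    (Cs : Module.Dual ℂ W →ₗ[ℂ] Module.Dual ℂ W →ₗ[ℂ] W)
    (ts : Module.Dual ℂ W) (w : VV W) : VV W :=
  ((1 / 2) * ts w.2.1, Cs w.2.2.1 ts, (3 * w.2.2.2) • ts, 0)

/-- The grading operator `E(α,r,s*,β*) = (−(3/2)α, −(1/2)r, (1/2)s*, (3/2)β*)`. -/
def gradE {W : Type*} [AddCommGroup W] [Module ℂ W] (w : VV W) : VV W :=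
  (-(3 / 2) * w.1, (-(1 / 2) : ℂ) • w.2.1, ((1 / 2) : ℂ) • w.2.2.1, (3 / 2) * w.2.2.2)

/-- The action of `ψ ∈ End(W)`: `ρ(ψ)(α,r,s*,β*) = (0, ψ r, −s* ∘ ψ, 0)`. -/
def rhoH {W : Type*} [AddCommGroup W] [Module ℂ W] (ψ : W →ₗ[ℂ] W) (w : VV W) : VV W :=
  (0, ψ w.2.1, -(w.2.2.1 ∘ₗ ψ), 0)

/-- The quartic
`Q(α,r,s*,β*) = (3αβ* − (1/2)s*(r))² + (1/3)(β*·C(r³) + α·C*(s*³)) − (1/6)·⟨C*(s*²),C(r²)⟩`. -/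
def Qquartic {W : Type*} [AddCommGroup W] [Module ℂ W]
    (C : W →ₗ[ℂ] W →ₗ[ℂ] Module.Dual ℂ W)
    (Cs : Module.Dual ℂ W →ₗ[ℂ] Module.Dual ℂ W →ₗ[ℂ] W) (w : VV W) : ℂ :=
  (3 * w.1 * w.2.2.2 - (1 / 2) * w.2.2.1 w.2.1) ^ 2
    + (1 / 3) * (w.2.2.2 * (C w.2.1 w.2.1) w.2.1 + w.1 * w.2.2.1 (Cs w.2.2.1 w.2.2.1))
    - (1 / 6) * (C w.2.1 w.2.1) (Cs w.2.2.1 w.2.2.1)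

/-- Interpolation lemma: a quartic polynomial in `ε` whose linear coefficient
(recovered by finite differences) vanishes. -/
theorem key4 (g : ℂ → ℂ) (q : ℂ)
    (hpoly : ∀ ε : ℂ, 24 * g ε = 24 * q
      + (16 * (g 1 - g (-1)) - 2 * (g 2 - g (-2))) * ε
      + (16 * (g 1 + g (-1) - 2 * q) - (g 2 + g (-2) - 2 * q)) * ε ^ 2
      + (2 * (g 2 - g (-2)) - 4 * (g 1 - g (-1))) * ε ^ 3
      + ((g 2 + g (-2) - 2 * q) - 4 * (g 1 + g (-1) - 2 * q)) * ε ^ 4)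
    (hlin : 8 * (g 1 - g (-1)) = g 2 - g (-2)) :
    ∃ c₂ c₃ c₄ : ℂ, ∀ ε : ℂ, g ε = q + c₂ * ε ^ 2 + c₃ * ε ^ 3 + c₄ * ε ^ 4 := by
  refine ⟨(16 * (g 1 + g (-1) - 2 * q) - (g 2 + g (-2) - 2 * q)) / 24,
    (2 * (g 2 - g (-2)) - 4 * (g 1 - g (-1))) / 24,
    ((g 2 + g (-2) - 2 * q) - 4 * (g 1 + g (-1) - 2 * q)) / 24, fun ε => ?_⟩
  linear_combination (hpoly ε) / 24 + (ε / 12) * hlin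

set_option maxHeartbeats 4000000 in
/-- The quartic `Q` is infinitesimally invariant under `ρ_W(t)`, `ρ_{W*}(t*)`, `E`,
and `ρ(ψ)` for every `ψ` leaving the cubics infinitesimally invariant. -/
theorem stmt1 {W : Type*} [AddCommGroup W] [Module ℂ W] [FiniteDimensional ℂ W]
    (C : W →ₗ[ℂ] W →ₗ[ℂ] Module.Dual ℂ W)
    (Cs : Module.Dual ℂ W →ₗ[ℂ] Module.Dual ℂ W →ₗ[ℂ] W)
    (hC : ∀ r s t : W, C r s t = C s r t ∧ C r s t = C r t s)
    (hCs : ∀ a b c : Module.Dual ℂ W, c (Cs a b) = c (Cs b a) ∧ c (Cs a b) = b (Cs a c))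
    (hI : ∀ (r t : W) (s : Module.Dual ℂ W),
      2 * (C r r) (Cs s (C r t)) = s t * (C r r) r + 3 * s r * (C r r) t)
    (hIs : ∀ (a b : Module.Dual ℂ W) (r : W),
      2 * (C r (Cs a b)) (Cs a a) = b r * a (Cs a a) + 3 * a r * b (Cs a a)) :
    (∀ (t : W) (w : VV W), ∃ c₂ c₃ c₄ : ℂ, ∀ ε : ℂ,
      Qquartic C Cs (w + ε • rhoW C t w)
        = Qquartic C Cs w + c₂ * ε ^ 2 + c₃ * ε ^ 3 + c₄ * ε ^ 4) ∧
    (∀ (ts : Module.Dual ℂ W) (w : VV W), ∃ c₂ c₃ c₄ : ℂ, ∀ ε : ℂ,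
      Qquartic C Cs (w + ε • rhoWs Cs ts w)
        = Qquartic C Cs w + c₂ * ε ^ 2 + c₃ * ε ^ 3 + c₄ * ε ^ 4) ∧
    (∀ w : VV W, ∃ c₂ c₃ c₄ : ℂ, ∀ ε : ℂ,
      Qquartic C Cs (w + ε • gradE w)
        = Qquartic C Cs w + c₂ * ε ^ 2 + c₃ * ε ^ 3 + c₄ * ε ^ 4) ∧
    (∀ ψ : W →ₗ[ℂ] W,
      (∀ r s t : W, (C (ψ r) s) t + (C r (ψ s)) t + (C r s) (ψ t) = 0) →
      (∀ a b c : Module.Dual ℂ W,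
        c (Cs (a ∘ₗ ψ) b) + c (Cs a (b ∘ₗ ψ)) + (c ∘ₗ ψ) (Cs a b) = 0) →
      ∀ w : VV W, ∃ c₂ c₃ c₄ : ℂ, ∀ ε : ℂ,
        Qquartic C Cs (w + ε • rhoH ψ w)
          = Qquartic C Cs w + c₂ * ε ^ 2 + c₃ * ε ^ 3 + c₄ * ε ^ 4) := by
  
  refine ⟨?_, ?_, ?_, ?_⟩
  · rintro t ⟨α, r, s, β⟩
    refine key4 (fun ε => Qquartic C Cs ((α, r, s, β) + ε • rhoW C t (α, r, s, β)))
      (Qquartic C Cs (α, r, s, β)) ?_ ?_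
    · intro ε
      simp only [Qquartic, rhoW, Prod.smul_mk, Prod.neg_mk, Prod.mk_add_mk, smul_eq_mul,
        smul_smul, smul_neg, neg_smul, neg_neg, one_smul, map_add, map_smul, map_neg,
        LinearMap.add_apply, LinearMap.neg_apply, LinearMap.smul_apply]
      ring
    · have hc1 : C t r = C r t := by ext z; exact (hC t r z).1
      have hc2 : C r t r = C r r t := (hC r t r).2
      have hd1 : s (Cs (C r t) s) = (C r t) (Cs s s) :=
        ((hCs (C r t) s s).1).trans ((hCs s (C r t) s).2)
      have hd2 : s (Cs s (C r t)) = (C r t) (Cs s s) := (hCs s (C r t) s).2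
      have hd3 : (C r r) (Cs (C r t) s) = (C r r) (Cs s (C r t)) := (hCs (C r t) s (C r r)).1
      simp only [Qquartic, rhoW, Prod.smul_mk, Prod.neg_mk, Prod.mk_add_mk, smul_eq_mul,
        smul_smul, smul_neg, neg_smul, neg_neg, one_smul, map_add, map_smul, map_neg,
        LinearMap.add_apply, LinearMap.neg_apply, LinearMap.smul_apply,
        hc1, hc2, hd1, hd2, hd3]
      linear_combination (norm := ring_nf) (-2) * hI r t s
  · rintro ts ⟨α, r, s, β⟩
    refine key4 (fun ε => Qquartic C Cs ((α, r, s, β) + ε • rhoWs Cs ts (α, r, s, β)))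
      (Qquartic C Cs (α, r, s, β)) ?_ ?_
    · intro ε
      simp only [Qquartic, rhoWs, Prod.smul_mk, Prod.neg_mk, Prod.mk_add_mk, smul_eq_mul,
        smul_smul, smul_neg, neg_smul, neg_neg, one_smul, map_add, map_smul, map_neg,
        LinearMap.add_apply, LinearMap.neg_apply, LinearMap.smul_apply]
      ring
    · have hf1 : C (Cs s ts) r = C r (Cs s ts) := by ext z; exact (hC (Cs s ts) r z).1
      have hf2 : C r (Cs s ts) r = C r r (Cs s ts) := (hC r (Cs s ts) r).2
      have he1 : s (Cs s ts) = ts (Cs s s) := (hCs s ts s).2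
      have he2 : s (Cs ts s) = ts (Cs s s) := ((hCs ts s s).1).trans he1
      have he3 : (C r r) (Cs ts s) = (C r r) (Cs s ts) := (hCs ts s (C r r)).1
      simp only [Qquartic, rhoWs, Prod.smul_mk, Prod.neg_mk, Prod.mk_add_mk, smul_eq_mul,
        smul_smul, smul_neg, neg_smul, neg_neg, one_smul, map_add, map_smul, map_neg,
        LinearMap.add_apply, LinearMap.neg_apply, LinearMap.smul_apply,
        hf1, hf2, he1, he2, he3]
      linear_combination (norm := ring_nf) (-2) * hIs s ts r
  · rintro ⟨α, r, s, β⟩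
    refine key4 (fun ε => Qquartic C Cs ((α, r, s, β) + ε • gradE (α, r, s, β)))
      (Qquartic C Cs (α, r, s, β)) ?_ ?_
    · intro ε
      simp only [Qquartic, gradE, Prod.smul_mk, Prod.neg_mk, Prod.mk_add_mk, smul_eq_mul,
        smul_smul, smul_neg, neg_smul, neg_neg, one_smul, map_add, map_smul, map_neg,
        LinearMap.add_apply, LinearMap.neg_apply, LinearMap.smul_apply]
      ring
    · simp only [Qquartic, gradE, Prod.smul_mk, Prod.neg_mk, Prod.mk_add_mk, smul_eq_mul,
        smul_smul, smul_neg, neg_smul, neg_neg, one_smul, map_add, map_smul, map_neg,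
        LinearMap.add_apply, LinearMap.neg_apply, LinearMap.smul_apply]
      ring
  · rintro ψ hψ hψs ⟨α, r, s, β⟩
    refine key4 (fun ε => Qquartic C Cs ((α, r, s, β) + ε • rhoH ψ (α, r, s, β)))
      (Qquartic C Cs (α, r, s, β)) ?_ ?_
    · intro ε
      simp only [Qquartic, rhoH, Prod.smul_mk, Prod.neg_mk, Prod.mk_add_mk, smul_eq_mul,
        smul_smul, smul_neg, neg_smul, neg_neg, one_smul, map_add, map_smul, map_neg,
        LinearMap.add_apply, LinearMap.neg_apply, LinearMap.smul_apply, LinearMap.comp_apply]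
      ring
    · have g1 := hψ r r r
      have g2 := hψs s s s
      have g3 := hψ r r (Cs s s)
      have g4 := hψs s s (C r r)
      simp only [LinearMap.comp_apply] at g2 g4
      simp only [Qquartic, rhoH, Prod.smul_mk, Prod.neg_mk, Prod.mk_add_mk, smul_eq_mul,
        smul_smul, smul_neg, neg_smul, neg_neg, one_smul, map_add, map_smul, map_neg,
        LinearMap.add_apply, LinearMap.neg_apply, LinearMap.smul_apply, LinearMap.comp_apply]
      linear_combination (norm := ring_nf) 4*β*g1 - 4*α*g2 - 2*g3 + 2*g4
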